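/- arXiv:2102.05542 — 6 statements merged into one kernel-verified Lean document; each statement's English description precedes it below -/
import Mathlib

section
/- Let E be a real normed vector space, let Ψ be a nonempty set, let F : Ψ × E → ℝ and W : E → ℝ satisfy F(ψ, θ) ≤ W(θ) for all ψ ∈ Ψ and θ ∈ E. Let θ₀ ∈ E and ψ₀ ∈ Ψ be such that F(ψ₀, θ₀) = W(θ₀). If W is Fréchet differentiable at θ₀ and θ ↦ F(ψ₀, θ) is Fréchet differentiable at θ₀, then their Fréchet derivatives at θ₀ coincide: DW(θ₀) = D(F(ψ₀, ·))(θ₀). -/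
open Filter Topology

theorem HasFDerivAt.eq_of_eventuallyLE_of_eq {E : Type*} [NormedAddCommGroup E]
    [NormedSpace ℝ E] {f g : E → ℝ} {f' g' : E →L[ℝ] ℝ} {x : E}
    (hf : HasFDerivAt f f' x) (hg : HasFDerivAt g g' x)
    (hle : f ≤ᶠ[𝓝 x] g) (heq : f x = g x) : f' = g' := by
  have hmin : IsLocalMin (fun y => g y - f y) x := by
    filter_upwards [hle] with y hy
    linarith
  exact (sub_eq_zero.mp (hmin.hasFDerivAt_eq_zero (hg.sub hf))).symm

theorem envelope_weak_general {E : Type*} [NormedAddCommGroup E] [NormedSpace ℝ E]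
    {Ψ : Type*} (F : Ψ → E → ℝ) (W : E → ℝ)
    (hle : ∀ (ψ : Ψ) (θ : E), F ψ θ ≤ W θ)
    (θ₀ : E) (ψ₀ : Ψ) (heq : F ψ₀ θ₀ = W θ₀)
    (DW DF : E →L[ℝ] ℝ)
    (hW : HasFDerivAt W DW θ₀) (hF : HasFDerivAt (F ψ₀) DF θ₀) :
    DW = DF :=
  (hF.eq_of_eventuallyLE_of_eq hW (Eventually.of_forall (hle ψ₀)) heq).symm

/-- **Weak envelope theorem.** If `W` dominates `F ψ` for every `ψ`, `ψ₀` attains the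
value of `W` at `θ₀`, and both `W` and `F ψ₀` are Fréchet differentiable at `θ₀`, then
their Fréchet derivatives at `θ₀` coincide. -/
theorem envelope_weak {E : Type*} [NormedAddCommGroup E] [NormedSpace ℝ E]
    {Ψ : Type*} [Nonempty Ψ] (F : Ψ → E → ℝ) (W : E → ℝ)
    (hle : ∀ (ψ : Ψ) (θ : E), F ψ θ ≤ W θ)
    (θ₀ : E) (ψ₀ : Ψ) (heq : F ψ₀ θ₀ = W θ₀)
    (DW DF : E →L[ℝ] ℝ)
    (hW : HasFDerivAt W DW θ₀) (hF : HasFDerivAt (F ψ₀) DF θ₀) :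
    DW = DF :=
  envelope_weak_general F W hle θ₀ ψ₀ heq DW DF hW hF
end

section
/- Let X be a measurable space carrying a probability measure μ, let Y be a metric space, let λ > 0, let c : X × Y → ℝ be bounded and measurable in its first argument for each fixed y, let φ : X → ℝ be bounded and measurable, and let ω : ℝ → ℝ be nondecreasing. If |c(x, y) − c(x, y′)| ≤ ω(dist(y, y′)) for all x ∈ X and y, y′ ∈ Y, then the function φ^{c,λ}(y) = −λ · log ∫_X exp((φ(x) − c(x, y))/λ) dμ(x) satisfies |φ^{c,λ}(y) − φ^{c,λ}(y′)| ≤ ω(dist(y, y′)) for all y, y′ ∈ Y. -/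
open MeasureTheory Real

/-! Raising the exponent of `log ∫ exp u dμ` pointwise by at most `a` raises the value by at most
`a`. Since `c(·, y) - c(·, y') ≤ ω(dist y y')` uniformly, the exponents `(φ - c(·, y)) / λ` and
`(φ - c(·, y')) / λ` differ by at most `ω(dist y y') / λ`, and the factor `λ` cancels. -/

section LogIntegralExp

variable {X : Type*} [MeasurableSpace X] {μ : Measure X}

theorem integrable_exp_of_le [IsFiniteMeasure μ] {u : X → ℝ} (hu : AEStronglyMeasurable u μ)
    {C : ℝ} (hC : ∀ x, u x ≤ C) : Integrable (fun x => exp (u x)) μ :=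
  (integrable_const (exp C)).mono' (continuous_exp.comp_aestronglyMeasurable hu) <|
    .of_forall fun x => by simpa only [norm_eq_abs, abs_exp] using exp_le_exp.mpr (hC x)

theorem log_integral_exp_le_add [NeZero μ] {u v : X → ℝ} {a : ℝ}
    (hu : Integrable (fun x => exp (u x)) μ) (hv : Integrable (fun x => exp (v x)) μ)
    (huv : ∀ᵐ x ∂μ, u x ≤ v x + a) :
    log (∫ x, exp (u x) ∂μ) ≤ log (∫ x, exp (v x) ∂μ) + a := by
  have hint : ∫ x, exp (u x) ∂μ ≤ exp a * ∫ x, exp (v x) ∂μ := by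
    rw [← integral_const_mul]
    refine integral_mono_ae hu (hv.const_mul _) (huv.mono fun x hx => ?_)
    simpa only [← exp_add, add_comm a] using exp_le_exp.mpr hx
  calc log (∫ x, exp (u x) ∂μ) ≤ log (exp a * ∫ x, exp (v x) ∂μ) :=
        log_le_log (integral_exp_pos hu) hint
    _ = log (∫ x, exp (v x) ∂μ) + a := by
        rw [log_mul (exp_ne_zero a) (integral_exp_pos hv).ne', log_exp, add_comm]

end LogIntegralExp

section CLambdaTransform

variable {X Y : Type*} [MeasurableSpace X]

noncomputable def cLambdaTransform (μ : Measure X) (lam : ℝ) (c : X → Y → ℝ) (φ : X → ℝ)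
    (y : Y) : ℝ :=
  -lam * log (∫ x, exp ((φ x - c x y) / lam) ∂μ)

theorem cLambdaTransform_sub_le {μ : Measure X} [NeZero μ] {lam : ℝ} (hlam : 0 < lam)
    {c : X → Y → ℝ} {φ : X → ℝ} {y y' : Y}
    (hy : Integrable (fun x => exp ((φ x - c x y) / lam)) μ)
    (hy' : Integrable (fun x => exp ((φ x - c x y') / lam)) μ)
    {a : ℝ} (hc : ∀ x, c x y - c x y' ≤ a) :
    cLambdaTransform μ lam c φ y - cLambdaTransform μ lam c φ y' ≤ a := by
  have hshift : ∀ x, (φ x - c x y') / lam ≤ (φ x - c x y) / lam + a / lam := fun x => by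
    rw [← add_div]
    exact div_le_div_of_nonneg_right (by linarith [hc x]) hlam.le
  have hlog := log_integral_exp_le_add hy' hy (.of_forall hshift)
  calc cLambdaTransform μ lam c φ y - cLambdaTransform μ lam c φ y'
      = lam * (log (∫ x, exp ((φ x - c x y') / lam) ∂μ)
          - log (∫ x, exp ((φ x - c x y) / lam) ∂μ)) := by
        simp only [cLambdaTransform]; ring
    _ ≤ lam * (a / lam) := mul_le_mul_of_nonneg_left (by linarith) hlam.le
    _ = a := mul_div_cancel₀ a hlam.ne'

end CLambdaTransform

theorem cLambda_transform_modulus_general {X : Type*} [MeasurableSpace X]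
    (μ : Measure X) [IsProbabilityMeasure μ]
    {Y : Type*} [MetricSpace Y] (lam : ℝ) (hlam : 0 < lam)
    (c : X → Y → ℝ) (Mc : ℝ) (hcb : ∀ x y, |c x y| ≤ Mc)
    (hcm : ∀ y, Measurable fun x => c x y)
    (φ : X → ℝ) (Mφ : ℝ) (hφb : ∀ x, |φ x| ≤ Mφ) (hφm : Measurable φ)
    (ω : ℝ → ℝ)
    (hmod : ∀ x y y', |c x y - c x y'| ≤ ω (dist y y')) :
    ∀ y y' : Y,
      |(-lam * Real.log (∫ x, Real.exp ((φ x - c x y) / lam) ∂μ)) -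
        (-lam * Real.log (∫ x, Real.exp ((φ x - c x y') / lam) ∂μ))| ≤
      ω (dist y y') := by
  have hint : ∀ y, Integrable (fun x => exp ((φ x - c x y) / lam)) μ := fun y =>
    integrable_exp_of_le (C := (Mφ + Mc) / lam)
      ((hφm.sub (hcm y)).div_const lam).aestronglyMeasurable fun x =>
      div_le_div_of_nonneg_right
        (by linarith [(abs_le.mp (hφb x)).2, (abs_le.mp (hcb x y)).1]) hlam.le
  have hsub : ∀ y y', cLambdaTransform μ lam c φ y - cLambdaTransform μ lam c φ y'
      ≤ ω (dist y y') := fun y y' =>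
    cLambdaTransform_sub_le hlam (hint y) (hint y') fun x => (abs_le.mp (hmod x y y')).2
  intro y y'
  show |cLambdaTransform μ lam c φ y - cLambdaTransform μ lam c φ y'| ≤ _
  refine abs_sub_le_iff.mpr ⟨hsub y y', ?_⟩
  rw [dist_comm]
  exact hsub y' y

/-- The `(c,λ)`-transform `φ^{c,λ}(y) = -λ log ∫ exp((φ(x) - c(x,y))/λ) dμ(x)` inherits
any modulus of continuity `ω` of the cost `c` in its second variable. -/
theorem cLambda_transform_modulus {X : Type*} [MeasurableSpace X]
    (μ : Measure X) [IsProbabilityMeasure μ]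
    {Y : Type*} [MetricSpace Y] (lam : ℝ) (hlam : 0 < lam)
    (c : X → Y → ℝ) (Mc : ℝ) (hcb : ∀ x y, |c x y| ≤ Mc)
    (hcm : ∀ y, Measurable fun x => c x y)
    (φ : X → ℝ) (Mφ : ℝ) (hφb : ∀ x, |φ x| ≤ Mφ) (hφm : Measurable φ)
    (ω : ℝ → ℝ) (hω : Monotone ω)
    (hmod : ∀ x y y', |c x y - c x y'| ≤ ω (dist y y')) :
    ∀ y y' : Y,
      |(-lam * Real.log (∫ x, Real.exp ((φ x - c x y) / lam) ∂μ)) -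
        (-lam * Real.log (∫ x, Real.exp ((φ x - c x y') / lam) ∂μ))| ≤
      ω (dist y y') :=
  cLambda_transform_modulus_general μ lam hlam c Mc hcb hcm φ Mφ hφb hφm ω hmod
end

section
/- Let X and Y be compact metric spaces, λ > 0, κ ≥ 0, let c : X × Y → ℝ be continuous and satisfy |c(x, y) − c(x′, y)| ≤ κ · dist(x, x′) for all x, x′ ∈ X and y ∈ Y, and let ν be a Borel probability measure on Y. For a Borel probability measure μ on X, define W(μ) as the supremum over continuous functions ψ : Y → ℝ of ∫_X ψ^{c,λ}(x) dμ(x) + ∫_Y ψ(y) dν(y), where ψ^{c,λ}(x) = −λ · log ∫_Y exp((ψ(y) − c(x, y))/λ) dν(y); this supremum is a finite real number. Then for any measurable space Z with probability measure ζ and any measurable maps g₁, g₂ : Z → X such that z ↦ dist(g₁(z), g₂(z)) is integrable, one has |W(g₁♯ζ) − W(g₂♯ζ)| ≤ κ · ∫_Z dist(g₁(z), g₂(z)) dζ(z). -/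
/-!
For a fixed potential `ψ`, the (c,λ)-transform `ψ^{c,λ}` is a soft minimum over `y` of
`c(x, y) - ψ(y)`, so it inherits the `κ`-Lipschitz bound of `c` in `x`. Integrating that bound
against the coupling `z ↦ (g₁ z, g₂ z)` of `g₁♯ζ` and `g₂♯ζ` bounds the difference of the dual
objectives by `κ ∫ dist(g₁, g₂) dζ` uniformly in `ψ`, and uniformly close families have close
suprema.
-/

open MeasureTheory

/-- Semi-dual formulation of the entropy-regularized optimal transport cost
`OT_c^λ(μ, ν)` : the supremum over continuous dual potentials `ψ : Y → ℝ` of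
`∫ ψ^{c,λ} dμ + ∫ ψ dν`, where `ψ^{c,λ}(x) = -λ log ∫ exp((ψ(y) - c(x,y))/λ) dν(y)`. -/
noncomputable def Wreg {X : Type*} [MeasurableSpace X]
    {Y : Type*} [TopologicalSpace Y] [MeasurableSpace Y]
    (lam : ℝ) (c : X × Y → ℝ) (ν : Measure Y) (μ : Measure X) : ℝ :=
  ⨆ ψ : C(Y, ℝ),
    (∫ x, (-lam * Real.log (∫ y, Real.exp ((ψ y - c (x, y)) / lam) ∂ν)) ∂μ
      + ∫ y, ψ y ∂ν)

section iSup

variable {ι : Type*} {f g : ι → ℝ} {ε : ℝ}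

lemma bddAbove_range_of_le_add (hg : BddAbove (Set.range g)) (h : ∀ i, f i ≤ g i + ε) :
    BddAbove (Set.range f) := by
  obtain ⟨M, hM⟩ := hg
  exact ⟨M + ε, Set.forall_mem_range.2 fun i => (h i).trans (by gcongr; exact hM ⟨i, rfl⟩)⟩

lemma ciSup_le_ciSup_add [Nonempty ι] (hg : BddAbove (Set.range g)) (h : ∀ i, f i ≤ g i + ε) :
    ⨆ i, f i ≤ (⨆ i, g i) + ε :=
  ciSup_le fun i => (h i).trans (by gcongr; exact le_ciSup hg i)

/-- When the families are unbounded above, both suprema are the junk value `0`; hence `0 ≤ ε`. -/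
lemma abs_ciSup_sub_ciSup_le [Nonempty ι] (hε : 0 ≤ ε) (h : ∀ i, |f i - g i| ≤ ε) :
    |(⨆ i, f i) - ⨆ i, g i| ≤ ε := by
  have hfg : ∀ i, f i ≤ g i + ε := fun i => by linarith [(abs_le.1 (h i)).2]
  have hgf : ∀ i, g i ≤ f i + ε := fun i => by linarith [(abs_le.1 (h i)).1]
  by_cases hg : BddAbove (Set.range g)
  · have hf := bddAbove_range_of_le_add hg hfg
    rw [abs_sub_le_iff]
    constructor
    · linarith [ciSup_le_ciSup_add hg hfg]
    · linarith [ciSup_le_ciSup_add hf hgf]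
  · have hf : ¬BddAbove (Set.range f) := fun hf => hg (bddAbove_range_of_le_add hf hgf)
    simpa [Real.iSup_of_not_bddAbove hf, Real.iSup_of_not_bddAbove hg] using hε

end iSup

lemma log_integral_exp_le_log_integral_exp_add {α : Type*} [MeasurableSpace α]
    {μ : Measure α} [NeZero μ] {f g : α → ℝ} {a : ℝ}
    (hf : Integrable (fun x => Real.exp (f x)) μ) (hg : Integrable (fun x => Real.exp (g x)) μ)
    (h : ∀ x, f x ≤ g x + a) :
    Real.log (∫ x, Real.exp (f x) ∂μ) ≤ Real.log (∫ x, Real.exp (g x) ∂μ) + a := by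
  have hle : ∫ x, Real.exp (f x) ∂μ ≤ Real.exp a * ∫ x, Real.exp (g x) ∂μ := by
    rw [← integral_const_mul]
    refine integral_mono hf (hg.const_mul _) fun x => ?_
    rw [← Real.exp_add, Real.exp_le_exp]
    linarith [h x]
  calc Real.log (∫ x, Real.exp (f x) ∂μ)
      ≤ Real.log (Real.exp a * ∫ x, Real.exp (g x) ∂μ) :=
        Real.log_le_log (integral_exp_pos hf) hle
    _ = Real.log (∫ x, Real.exp (g x) ∂μ) + a := by
        rw [Real.log_mul (Real.exp_ne_zero a) (integral_exp_pos hg).ne', Real.log_exp, add_comm]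

noncomputable def entropicCTransform {X Y : Type*} [MeasurableSpace Y]
    (lam : ℝ) (c : X × Y → ℝ) (ν : Measure Y) (ψ : Y → ℝ) (x : X) : ℝ :=
  -lam * Real.log (∫ y, Real.exp ((ψ y - c (x, y)) / lam) ∂ν)

lemma lipschitzWith_entropicCTransform {X Y : Type*} [PseudoMetricSpace X] [MeasurableSpace Y]
    {lam : ℝ} (hlam : 0 < lam) {κ : NNReal} {c : X × Y → ℝ}
    (hclip : ∀ x x' : X, ∀ y : Y, |c (x, y) - c (x', y)| ≤ κ * dist x x')
    {ν : Measure Y} [NeZero ν] {ψ : Y → ℝ}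
    (hint : ∀ x, Integrable (fun y => Real.exp ((ψ y - c (x, y)) / lam)) ν) :
    LipschitzWith κ (entropicCTransform lam c ν ψ) := by
  refine LipschitzWith.of_le_add_mul κ fun x x' => ?_
  have hlog := log_integral_exp_le_log_integral_exp_add (a := κ * dist x x' / lam)
    (hint x') (hint x) fun y => by
      rw [← add_div, div_le_div_iff_of_pos_right hlam]
      linarith [(abs_le.1 (hclip x x' y)).2]
  have hscaled := mul_le_mul_of_nonneg_left hlog hlam.le
  rw [mul_add, mul_div_cancel₀ _ hlam.ne'] at hscaled
  unfold entropicCTransform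
  linarith

lemma LipschitzWith.abs_integral_map_sub_integral_map_le {X Z : Type*} [PseudoMetricSpace X]
    [CompactSpace X] [MeasurableSpace X] [OpensMeasurableSpace X] [MeasurableSpace Z]
    {K : NNReal} {f : X → ℝ} (hf : LipschitzWith K f) (ζ : Measure Z) [IsFiniteMeasure ζ]
    {g₁ g₂ : Z → X} (hg₁ : Measurable g₁) (hg₂ : Measurable g₂)
    (hint : Integrable (fun z => dist (g₁ z) (g₂ z)) ζ) :
    |∫ x, f x ∂(Measure.map g₁ ζ) - ∫ x, f x ∂(Measure.map g₂ ζ)| ≤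
      K * ∫ z, dist (g₁ z) (g₂ z) ∂ζ := by
  obtain ⟨C, hC⟩ := (isCompact_univ.image hf.continuous).isBounded.exists_norm_le
  have hcomp : ∀ {g : Z → X}, Measurable g → Integrable (fun z => f (g z)) ζ := fun {g} hg =>
    .of_bound (hf.continuous.measurable.comp hg).aestronglyMeasurable C
      (ae_of_all _ fun z => hC _ ⟨g z, trivial, rfl⟩)
  rw [integral_map hg₁.aemeasurable hf.continuous.aestronglyMeasurable,
    integral_map hg₂.aemeasurable hf.continuous.aestronglyMeasurable,
    ← integral_sub (hcomp hg₁) (hcomp hg₂), ← integral_const_mul]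
  refine (abs_integral_le_integral_abs).trans <|
    integral_mono ((hcomp hg₁).sub (hcomp hg₂)).abs (hint.const_mul _) fun z => ?_
  exact hf.dist_le_mul (g₁ z) (g₂ z)

/-- If `c` is continuous and `κ`-Lipschitz in its first variable, then the regularized
transport cost of pushforward measures satisfies
`|W(g₁♯ζ) - W(g₂♯ζ)| ≤ κ ∫ dist(g₁(z), g₂(z)) dζ(z)`. -/
theorem Wreg_pushforward_diff_le {X : Type*} [MetricSpace X] [CompactSpace X]
    [MeasurableSpace X] [BorelSpace X]
    {Y : Type*} [MetricSpace Y] [CompactSpace Y] [MeasurableSpace Y] [BorelSpace Y]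
    (lam : ℝ) (hlam : 0 < lam) (κ : ℝ) (hκ : 0 ≤ κ)
    (c : X × Y → ℝ) (hc : Continuous c)
    (hclip : ∀ x x' : X, ∀ y : Y, |c (x, y) - c (x', y)| ≤ κ * dist x x')
    (ν : Measure Y) [IsProbabilityMeasure ν]
    {Z : Type*} [MeasurableSpace Z] (ζ : Measure Z) [IsProbabilityMeasure ζ]
    (g₁ g₂ : Z → X) (hg₁ : Measurable g₁) (hg₂ : Measurable g₂)
    (hint : Integrable (fun z => dist (g₁ z) (g₂ z)) ζ) :
    |Wreg lam c ν (Measure.map g₁ ζ) - Wreg lam c ν (Measure.map g₂ ζ)| ≤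
      κ * ∫ z, dist (g₁ z) (g₂ z) ∂ζ := by
  have hlip (ψ : C(Y, ℝ)) : LipschitzWith ⟨κ, hκ⟩ (entropicCTransform lam c ν ψ) :=
    lipschitzWith_entropicCTransform hlam hclip fun x =>
      (((ψ.continuous.sub (hc.comp (Continuous.prodMk_right x))).div_const lam).rexp
        ).integrable_of_hasCompactSupport (.of_compactSpace _)
  refine abs_ciSup_sub_ciSup_le (mul_nonneg hκ (integral_nonneg fun z => dist_nonneg))
    fun ψ => ?_
  rw [add_sub_add_right_eq_sub]
  exact (hlip ψ).abs_integral_map_sub_integral_map_le ζ hg₁ hg₂ hint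
end

section
/- Let X and Y be compact metric spaces, λ > 0, κ ≥ 0, let c : X × Y → ℝ be continuous and satisfy |c(x, y) − c(x′, y)| ≤ κ · dist(x, x′) for all x, x′ ∈ X and y ∈ Y, and let ν be a Borel probability measure on Y. For a Borel probability measure μ on X define W(μ) as the supremum over continuous ψ : Y → ℝ of ∫_X ψ^{c,λ}(x) dμ(x) + ∫_Y ψ(y) dν(y). Then for any two Borel probability measures μ₁, μ₂ on X, |W(μ₁) − W(μ₂)| ≤ κ · sup { |∫ φ dμ₁ − ∫ φ dμ₂| : φ : X → ℝ is 1-Lipschitz }. -/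
/-! The `(c,λ)`-transform of any potential `ψ` is `κ`-Lipschitz: the log-partition function
`g ↦ log ∫ exp g dν` is `1`-Lipschitz for the sup norm, and moving `x` by `d` moves
`(ψ - c(x,·))/λ` by at most `κ d / |λ|` uniformly in `y`. So for each `ψ` the two objectives
`∫ ψ^{c,λ} dμᵢ + ∫ ψ dν` differ by `|∫ ψ^{c,λ} dμ₁ - ∫ ψ^{c,λ} dμ₂|`, which is at most `κ` times the
Kantorovich–Rubinstein distance, and a uniform bound between two families passes to their
suprema. -/

open MeasureTheory

open Set Real
open scoped NNReal

/-- Holds also for unbounded families, whose `⨆` is the junk value `0`: the hypothesis makes `f`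
and `g` bounded above together. -/
theorem Real.abs_iSup_sub_iSup_le {ι : Sort*} [Nonempty ι] {f g : ι → ℝ} {C : ℝ}
    (h : ∀ i, |f i - g i| ≤ C) : |(⨆ i, f i) - ⨆ i, g i| ≤ C := by
  have bddAbove_of {f g : ι → ℝ} (h : ∀ i, |f i - g i| ≤ C) (hg : BddAbove (range g)) :
      BddAbove (range f) := by
    obtain ⟨b, hb⟩ := hg
    refine ⟨b + C, forall_mem_range.2 fun i => ?_⟩
    linarith [hb (mem_range_self i), (abs_le.1 (h i)).2]
  have h' : ∀ i, |g i - f i| ≤ C := fun i => abs_sub_comm (f i) (g i) ▸ h i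
  by_cases hg : BddAbove (range g)
  · have hf := bddAbove_of h hg
    refine abs_sub_le_iff.2 ⟨sub_le_iff_le_add.2 (ciSup_le fun i => ?_),
      sub_le_iff_le_add.2 (ciSup_le fun i => ?_)⟩
    · linarith [le_ciSup hg i, (abs_le.1 (h i)).2]
    · linarith [le_ciSup hf i, (abs_le.1 (h' i)).2]
  · have hf : ¬BddAbove (range f) := fun hf => hg (bddAbove_of h' hf)
    rw [Real.iSup_of_not_bddAbove hf, Real.iSup_of_not_bddAbove hg, sub_self, abs_zero]
    exact (abs_nonneg _).trans (h (Classical.arbitrary ι))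

theorem abs_log_integral_exp_sub_le {Y : Type*} [MeasurableSpace Y] {ν : Measure Y} [NeZero ν]
    {g h : Y → ℝ} {a : ℝ} (hg : Integrable (fun y => exp (g y)) ν)
    (hh : Integrable (fun y => exp (h y)) ν) (hgh : ∀ y, |g y - h y| ≤ a) :
    |log (∫ y, exp (g y) ∂ν) - log (∫ y, exp (h y) ∂ν)| ≤ a := by
  have le_add {g h : Y → ℝ} (hg : Integrable (fun y => exp (g y)) ν)
      (hh : Integrable (fun y => exp (h y)) ν) (hgh : ∀ y, g y ≤ h y + a) :
      log (∫ y, exp (g y) ∂ν) ≤ log (∫ y, exp (h y) ∂ν) + a := by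
    have hmono : ∫ y, exp (g y) ∂ν ≤ exp a * ∫ y, exp (h y) ∂ν := by
      rw [← integral_const_mul]
      refine integral_mono hg (hh.const_mul _) fun y => ?_
      rw [← exp_add]
      exact exp_le_exp.2 (by linarith [hgh y])
    calc log (∫ y, exp (g y) ∂ν) ≤ log (exp a * ∫ y, exp (h y) ∂ν) :=
          log_le_log (integral_exp_pos hg) hmono
      _ = log (∫ y, exp (h y) ∂ν) + a := by
          rw [log_mul (exp_ne_zero a) (integral_exp_pos hh).ne', log_exp, add_comm]
  refine abs_sub_le_iff.2 ⟨sub_le_iff_le_add'.2 ?_, sub_le_iff_le_add'.2 ?_⟩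
  · exact le_add hg hh fun y => by linarith [(abs_le.1 (hgh y)).2]
  · exact le_add hh hg fun y => by linarith [(abs_le.1 (hgh y)).1]

noncomputable def cTransform {X Y : Type*} [MeasurableSpace Y] (lam : ℝ) (c : X × Y → ℝ)
    (ν : Measure Y) (ψ : Y → ℝ) (x : X) : ℝ :=
  -lam * log (∫ y, exp ((ψ y - c (x, y)) / lam) ∂ν)

theorem lipschitzWith_cTransform {X Y : Type*} [PseudoMetricSpace X] [TopologicalSpace Y]
    [CompactSpace Y] [MeasurableSpace Y] [OpensMeasurableSpace Y] {ν : Measure Y}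
    [IsFiniteMeasure ν] [NeZero ν] (lam : ℝ) {c : X × Y → ℝ} {K : ℝ≥0}
    (hc : ∀ x, Continuous fun y => c (x, y))
    (hc_lip : ∀ x x' : X, ∀ y : Y, |c (x, y) - c (x', y)| ≤ K * dist x x')
    {ψ : Y → ℝ} (hψ : Continuous ψ) : LipschitzWith K (cTransform lam c ν ψ) := by
  have hint (x : X) : Integrable (fun y => exp ((ψ y - c (x, y)) / lam)) ν :=
    ((hψ.sub (hc x)).div_const lam).rexp.integrable_of_hasCompactSupport (.of_compactSpace _)
  refine LipschitzWith.of_dist_le_mul fun x x' => ?_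
  have hlog := abs_log_integral_exp_sub_le (hint x) (hint x') (a := K * dist x x' / |lam|)
    fun y => by
      rw [← sub_div, sub_sub_sub_cancel_left, abs_div, dist_comm]
      exact div_le_div_of_nonneg_right (hc_lip x' x y) (abs_nonneg lam)
  rw [Real.dist_eq]
  calc |cTransform lam c ν ψ x - cTransform lam c ν ψ x'|
      = |lam| * |log (∫ y, exp ((ψ y - c (x, y)) / lam) ∂ν)
          - log (∫ y, exp ((ψ y - c (x', y)) / lam) ∂ν)| := by
        simp only [cTransform]; rw [← mul_sub, abs_mul, abs_neg]
    _ ≤ |lam| * (K * dist x x' / |lam|) := by gcongr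
    _ ≤ K * dist x x' := by
        rcases eq_or_ne lam 0 with rfl | hlam
        · simp only [abs_zero, zero_mul]; positivity
        · rw [mul_div_cancel₀ _ (abs_ne_zero.2 hlam)]

/-- Its `sSup` is the Kantorovich–Rubinstein distance of `μ₁` and `μ₂` in dual form. -/
def lipschitzIntegralGaps {X : Type*} [PseudoMetricSpace X] [MeasurableSpace X]
    (μ₁ μ₂ : Measure X) : Set ℝ :=
  {r | ∃ φ : X → ℝ, LipschitzWith 1 φ ∧ r = |∫ x, φ x ∂μ₁ - ∫ x, φ x ∂μ₂|}

section
variable {X : Type*} [PseudoMetricSpace X] [CompactSpace X] [MeasurableSpace X]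
  [OpensMeasurableSpace X]

theorem abs_integral_sub_le_diam (μ : Measure X) [IsProbabilityMeasure μ] {φ : X → ℝ}
    (hφ : LipschitzWith 1 φ) (x₀ : X) : |∫ x, φ x ∂μ - φ x₀| ≤ Metric.diam (univ : Set X) := by
  have hint : Integrable φ μ :=
    hφ.continuous.integrable_of_hasCompactSupport (.of_compactSpace _)
  have hbound : ∀ x, ‖φ x - φ x₀‖ ≤ Metric.diam (univ : Set X) := fun x => by
    rw [← dist_eq_norm, ← one_mul (Metric.diam _)]
    exact hφ.dist_le_mul_of_le (Metric.dist_le_diam_of_mem isCompact_univ.isBounded trivial trivial)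
  have := norm_integral_le_of_norm_le_const (μ := μ) (.of_forall hbound)
  rwa [probReal_univ, mul_one, integral_sub hint (integrable_const _), integral_const,
    probReal_univ, one_smul, Real.norm_eq_abs] at this

variable (μ₁ μ₂ : Measure X) [IsProbabilityMeasure μ₁] [IsProbabilityMeasure μ₂]

theorem bddAbove_lipschitzIntegralGaps : BddAbove (lipschitzIntegralGaps μ₁ μ₂) := by
  obtain ⟨x₀⟩ := nonempty_of_isProbabilityMeasure μ₁
  refine ⟨2 * Metric.diam (univ : Set X), ?_⟩
  rintro r ⟨φ, hφ, rfl⟩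
  calc |∫ x, φ x ∂μ₁ - ∫ x, φ x ∂μ₂|
      ≤ |∫ x, φ x ∂μ₁ - φ x₀| + |∫ x, φ x ∂μ₂ - φ x₀| :=
        (abs_sub_le _ (φ x₀) _).trans_eq (by rw [abs_sub_comm (φ x₀)])
    _ ≤ 2 * Metric.diam (univ : Set X) := by
        linarith [abs_integral_sub_le_diam μ₁ hφ x₀, abs_integral_sub_le_diam μ₂ hφ x₀]

theorem abs_integral_sub_le_mul_sSup_lipschitzIntegralGaps {K : ℝ≥0} {f : X → ℝ}
    (hf : LipschitzWith K f) :
    |∫ x, f x ∂μ₁ - ∫ x, f x ∂μ₂| ≤ K * sSup (lipschitzIntegralGaps μ₁ μ₂) := by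
  rcases eq_zero_or_pos K with rfl | hK
  · obtain ⟨x₀⟩ := nonempty_of_isProbabilityMeasure μ₁
    have hconst : f = fun _ => f x₀ :=
      funext fun x => dist_le_zero.1 (by simpa using hf.dist_le_mul x x₀)
    rw [hconst]
    simp
  have hK' : (0 : ℝ) < K := hK
  have hφ : LipschitzWith 1 fun x => (K : ℝ)⁻¹ * f x := .of_dist_le_mul fun x y => by
    rw [Real.dist_eq, ← mul_sub, abs_mul, abs_inv, NNReal.abs_eq, NNReal.coe_one, one_mul,
      inv_mul_le_iff₀ hK', ← Real.dist_eq]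
    exact hf.dist_le_mul x y
  have hscale (μ : Measure X) : ∫ x, f x ∂μ = K * ∫ x, (K : ℝ)⁻¹ * f x ∂μ := by
    rw [integral_const_mul, mul_inv_cancel_left₀ hK'.ne']
  rw [hscale μ₁, hscale μ₂, ← mul_sub, abs_mul, NNReal.abs_eq]
  gcongr
  exact le_csSup (bddAbove_lipschitzIntegralGaps μ₁ μ₂) ⟨_, hφ, rfl⟩

end

theorem Wreg_diff_le_kantorovich_general {X : Type*} [MetricSpace X] [CompactSpace X]
    [MeasurableSpace X] [BorelSpace X]
    {Y : Type*} [MetricSpace Y] [CompactSpace Y] [MeasurableSpace Y] [BorelSpace Y]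
    (lam : ℝ) (κ : ℝ) (hκ : 0 ≤ κ)
    (c : X × Y → ℝ) (hc : Continuous c)
    (hclip : ∀ x x' : X, ∀ y : Y, |c (x, y) - c (x', y)| ≤ κ * dist x x')
    (ν : Measure Y) [IsProbabilityMeasure ν]
    (μ₁ μ₂ : Measure X) [IsProbabilityMeasure μ₁] [IsProbabilityMeasure μ₂] :
    |Wreg lam c ν μ₁ - Wreg lam c ν μ₂| ≤
      κ * sSup {r : ℝ | ∃ φ : X → ℝ, LipschitzWith 1 φ ∧
        r = |∫ x, φ x ∂μ₁ - ∫ x, φ x ∂μ₂|} := by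
  have htransform (ψ : C(Y, ℝ)) : LipschitzWith ⟨κ, hκ⟩ (cTransform lam c ν ψ) :=
    lipschitzWith_cTransform (K := ⟨κ, hκ⟩) lam (fun x => hc.comp (.prodMk_right x)) hclip
      ψ.continuous
  refine Real.abs_iSup_sub_iSup_le fun ψ => ?_
  rw [add_sub_add_right_eq_sub]
  exact abs_integral_sub_le_mul_sSup_lipschitzIntegralGaps μ₁ μ₂ (htransform ψ)

/-- If `c` is continuous and `κ`-Lipschitz in its first variable, the regularized
transport cost is controlled by `κ` times the Kantorovich–Rubinstein distance:
`|W(μ₁) - W(μ₂)| ≤ κ · sup { |∫ φ dμ₁ - ∫ φ dμ₂| : φ 1-Lipschitz }`. -/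
theorem Wreg_diff_le_kantorovich {X : Type*} [MetricSpace X] [CompactSpace X]
    [MeasurableSpace X] [BorelSpace X]
    {Y : Type*} [MetricSpace Y] [CompactSpace Y] [MeasurableSpace Y] [BorelSpace Y]
    (lam : ℝ) (hlam : 0 < lam) (κ : ℝ) (hκ : 0 ≤ κ)
    (c : X × Y → ℝ) (hc : Continuous c)
    (hclip : ∀ x x' : X, ∀ y : Y, |c (x, y) - c (x', y)| ≤ κ * dist x x')
    (ν : Measure Y) [IsProbabilityMeasure ν]
    (μ₁ μ₂ : Measure X) [IsProbabilityMeasure μ₁] [IsProbabilityMeasure μ₂] :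
    |Wreg lam c ν μ₁ - Wreg lam c ν μ₂| ≤
      κ * sSup {r : ℝ | ∃ φ : X → ℝ, LipschitzWith 1 φ ∧
        r = |∫ x, φ x ∂μ₁ - ∫ x, φ x ∂μ₂|} :=
  Wreg_diff_le_kantorovich_general lam κ hκ c hc hclip ν μ₁ μ₂
end

section
/- Let Ψ be a topological space, E a real normed vector space, h : Ψ × E → ℝ, and θ₀ ∈ E. Assume: (i) there is a map s : E → Ψ, continuous at θ₀, such that h(ψ, θ) ≤ h(s(θ), θ) for all ψ ∈ Ψ and all θ ∈ E (i.e., s(θ) maximizes h(·, θ)); (ii) there are an open neighborhood U of s(θ₀), an open ball V around θ₀, and a map D : Ψ × E → (continuous linear maps E → ℝ), continuous at (s(θ₀), θ₀), such that for every (ψ, θ) ∈ U × V the map θ ↦ h(ψ, θ) has Fréchet derivative D(ψ, θ) at θ. Then the value function w(θ) = h(s(θ), θ) = sup_{ψ∈Ψ} h(ψ, θ) is Fréchet differentiable at θ₀ with derivative Dw(θ₀) = D(s(θ₀), θ₀). -/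
open Topology Filter


/-- **Strong envelope theorem** (Oyama–Takenawa, Prop. A.1): given a selection of
maximizers `s` continuous at `θ₀`, and a partial Fréchet derivative `D ψ θ` of
`θ ↦ h ψ θ`, valid on a neighborhood `U × V` of `(s θ₀, θ₀)` and jointly continuous at
`(s θ₀, θ₀)`, the value function `w(θ) = h (s θ) θ = sup_ψ h ψ θ` is Fréchet
differentiable at `θ₀` with derivative `D (s θ₀) θ₀`. -/
theorem strong_envelope {Ψ : Type*} [TopologicalSpace Ψ]
    {E : Type*} [NormedAddCommGroup E] [NormedSpace ℝ E]
    (h : Ψ → E → ℝ) (θ₀ : E)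
    (s : E → Ψ) (hs : ContinuousAt s θ₀)
    (hmax : ∀ (ψ : Ψ) (θ : E), h ψ θ ≤ h (s θ) θ)
    (U : Set Ψ) (hU : IsOpen U) (hsU : s θ₀ ∈ U)
    (r : ℝ) (hr : 0 < r)
    (D : Ψ → E → (E →L[ℝ] ℝ))
    (hDcont : ContinuousAt (fun p : Ψ × E => D p.1 p.2) (s θ₀, θ₀))
    (hderiv : ∀ ψ ∈ U, ∀ θ ∈ Metric.ball θ₀ r, HasFDerivAt (h ψ) (D ψ θ) θ) :
    HasFDerivAt (fun θ => h (s θ) θ) (D (s θ₀) θ₀) θ₀ := by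
  set D₀ := D (s θ₀) θ₀ with hD₀
  rw [hasFDerivAt_iff_isLittleO_nhds_zero] at *
  rw [Asymptotics.isLittleO_iff]
  intro ε hε
  -- neighborhood where D is ε-close to D₀, inside U × ball θ₀ r
  have hS : ((fun p : Ψ × E => D p.1 p.2) ⁻¹' Metric.ball D₀ ε) ∩ (U ×ˢ Metric.ball θ₀ r)
      ∈ 𝓝 (s θ₀, θ₀) := by
    refine Filter.inter_mem (hDcont (Metric.ball_mem_nhds D₀ hε)) ?_
    rw [nhds_prod_eq]
    exact Filter.prod_mem_prod (hU.mem_nhds hsU) (Metric.ball_mem_nhds _ hr)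
  rw [mem_nhds_prod_iff] at hS
  obtain ⟨t, ht, u, hu, htu⟩ := hS
  obtain ⟨δ, hδ, hδu⟩ := Metric.mem_nhds_iff.mp hu
  have hball : Metric.ball θ₀ δ ∈ 𝓝 θ₀ := Metric.ball_mem_nhds _ hδ
  -- we reformulate the goal over θ₀ + θ' with θ' small
  have hmem0 : (0 : E) ∈ Metric.ball (0 : E) δ := Metric.mem_ball_self hδ
  have htrans : Filter.Tendsto (fun θ' : E => θ₀ + θ') (𝓝 0) (𝓝 θ₀) := by
    simpa using (tendsto_const_nhds (x := θ₀) (f := 𝓝 (0:E))).add tendsto_id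
  filter_upwards [htrans.eventually (hs.tendsto.eventually_mem ht),
    Metric.ball_mem_nhds (0 : E) hδ] with θ' hsθ hθ'
  have hθ : θ₀ + θ' ∈ Metric.ball θ₀ δ := by
    simpa [dist_eq_norm] using Metric.mem_ball.mp hθ'
  -- key mean value estimate for any ψ ∈ t
  have key : ∀ ψ ∈ t, ‖(h ψ (θ₀ + θ') - D₀ (θ₀ + θ')) - (h ψ θ₀ - D₀ θ₀)‖
      ≤ ε * ‖(θ₀ + θ') - θ₀‖ := by
    intro ψ hψ
    have hfacts : ∀ x ∈ Metric.ball θ₀ δ,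
        D ψ x ∈ Metric.ball D₀ ε ∧ ψ ∈ U ∧ x ∈ Metric.ball θ₀ r := by
      intro x hx
      have := htu (Set.mk_mem_prod hψ (hδu hx))
      exact ⟨this.1, this.2.1, this.2.2⟩
    refine Convex.norm_image_sub_le_of_norm_hasFDerivWithin_le
      (f := fun x => h ψ x - D₀ x) (f' := fun x => D ψ x - D₀)
      (fun x hx => ?_) (fun x hx => ?_) (convex_ball θ₀ δ) (Metric.mem_ball_self hδ) hθ
    · obtain ⟨_, hU', hr'⟩ := hfacts x hx
      exact ((hderiv ψ hU' x hr').sub (D₀.hasFDerivAt)).hasFDerivWithinAt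
    · obtain ⟨hb, _, _⟩ := hfacts x hx
      have : dist (D ψ x) D₀ < ε := Metric.mem_ball.mp hb
      rw [dist_eq_norm] at this
      exact this.le
  have ht0 : s θ₀ ∈ t := mem_of_mem_nhds ht
  have k1 := key (s θ₀) ht0
  have k2 := key (s (θ₀ + θ')) hsθ
  have e1 : D₀ (θ₀ + θ') = D₀ θ₀ + D₀ θ' := map_add D₀ θ₀ θ'
  have e2 : ‖(θ₀ + θ') - θ₀‖ = ‖θ'‖ := by congr 1; abel
  rw [Real.norm_eq_abs, abs_le] at k1 k2 ⊢
  rw [e2] at k1 k2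
  have m1 := hmax (s θ₀) (θ₀ + θ')
  have m2 := hmax (s (θ₀ + θ')) θ₀
  exact ⟨by linarith [k1.1], by linarith [k2.2]⟩
end

section
/- Let λ > 0, let y₁, …, y_n ∈ ℝ^m, let c : ℝ^d × ℝ^m → ℝ be continuously differentiable, let ζ be a compactly supported Borel probability measure on ℝ^q, and let g : ℝ^k × ℝ^q → ℝ^d be continuously differentiable. For ψ ∈ ℝⁿ, set ψ^{c,λ}(x) = −λ · log( (1/n)·Σ_i exp((ψ_i − c(x, y_i))/λ) ) and F(ψ, θ) = ∫ ψ^{c,λ}(g(θ, z)) dζ(z) + (1/n)·Σ_i ψ_i. Assume there is a continuous map s : ℝ^k → ℝⁿ such that for every θ, F(ψ, θ) ≤ F(s(θ), θ) for all ψ ∈ ℝⁿ. Then the value function W(θ) = F(s(θ), θ) = sup_{ψ∈ℝⁿ} F(ψ, θ) is differentiable at every θ ∈ ℝ^k, with gradient ∇W(θ) = ∫ (∂_θ g(θ, z))ᵀ · Σ_{i=1}^n η_i(g(θ, z)) · ∇_x c(g(θ, z), y_i) dζ(z), where η_i(x) = exp((s(θ)_i − c(x, y_i))/λ) / Σ_j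 exp((s(θ)_j − c(x, y_j))/λ). -/
open MeasureTheory Finset Filter Topology Asymptotics InnerProductSpace Real

/-!
`W(θ) = F(s θ, θ)` is the upper envelope of the family `F(ψ, ·)`, each member of which is
differentiable with derivative `D(ψ, θ) = ∫ ∂_θ[ψ^{c,λ}(g(θ, z))] dζ(z)`, jointly continuous in
`(ψ, θ)` because `ζ` has compact support. Maximality of `s` squeezes `W(θ + h) - W(θ)` between
`F(s θ, θ + h) - F(s θ, θ)` and `F(ψ, θ + h) - F(ψ, θ)` with `ψ = s(θ + h)`; since `ψ → s θ`, the
mean value inequality makes both `D(s θ, θ) h + o(‖h‖)` (Danskin's envelope theorem). The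
derivative of `ψ^{c,λ}` is the softmax average `Σᵢ ηᵢ ∂ₓc(·, yᵢ)`, and the stated gradient is the
Riesz representative of `D(s θ, θ)`.
-/

noncomputable section

section Envelope

variable {Ψ Θ : Type*} [TopologicalSpace Ψ] [NormedAddCommGroup Θ] [NormedSpace ℝ Θ]
  {F : Ψ → Θ → ℝ} {D : Ψ → Θ → Θ →L[ℝ] ℝ}

theorem isLittleO_sub_sub_fderiv_of_continuousAt {ψ₀ : Ψ} {θ₀ : Θ}
    (hF : ∀ ψ θ, HasFDerivAt (F ψ) (D ψ θ) θ)
    (hD : ContinuousAt (fun p : Ψ × Θ => D p.1 p.2) (ψ₀, θ₀)) :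
    (fun p : Ψ × Θ => F p.1 (θ₀ + p.2) - F p.1 θ₀ - D ψ₀ θ₀ p.2) =o[𝓝 ψ₀ ×ˢ 𝓝 0] Prod.snd := by
  refine isLittleO_iff.mpr fun ε hε => ?_
  have hclose : ∀ᶠ p : Ψ × Θ in 𝓝 (ψ₀, θ₀), ‖D p.1 p.2 - D ψ₀ θ₀‖ ≤ ε :=
    (tendsto_iff_norm_sub_tendsto_zero.mp hD).eventually (ge_mem_nhds hε)
  obtain ⟨U, hU, V, hV, hUV⟩ := mem_nhds_prod_iff.mp hclose
  obtain ⟨r, hr, hball⟩ := Metric.mem_nhds_iff.mp hV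
  filter_upwards [prod_mem_prod hU (Metric.ball_mem_nhds 0 hr)] with ⟨ψ, h⟩ ⟨hψ, hh⟩
  have hnear : ∀ θ ∈ Metric.ball θ₀ r, ‖D ψ θ - D ψ₀ θ₀‖ ≤ ε := fun θ hθ =>
    @hUV (ψ, θ) ⟨hψ, hball hθ⟩
  have hmvt := (convex_ball θ₀ r).norm_image_sub_le_of_norm_hasFDerivWithin_le'
    (fun θ _ => (hF ψ θ).hasFDerivWithinAt) hnear (Metric.mem_ball_self hr)
    (y := θ₀ + h) (by simpa using hh)
  rwa [add_sub_cancel_left] at hmvt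

theorem hasFDerivAt_envelope {s : Θ → Ψ} {θ₀ : Θ}
    (hF : ∀ ψ θ, HasFDerivAt (F ψ) (D ψ θ) θ)
    (hD : ContinuousAt (fun p : Ψ × Θ => D p.1 p.2) (s θ₀, θ₀)) (hs : ContinuousAt s θ₀)
    (hmax : ∀ θ ψ, F ψ θ ≤ F (s θ) θ) :
    HasFDerivAt (fun θ => F (s θ) θ) (D (s θ₀) θ₀) θ₀ := by
  have hsmall := isLittleO_sub_sub_fderiv_of_continuousAt hF hD
  have hshift : Tendsto (fun h : Θ => θ₀ + h) (𝓝 0) (𝓝 θ₀) := by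
    simpa using tendsto_const_nhds.add (tendsto_id (x := 𝓝 (0 : Θ)))
  have hlower := hsmall.comp_tendsto (tendsto_const_nhds.prodMk tendsto_id)
  have hupper := hsmall.comp_tendsto ((hs.tendsto.comp hshift).prodMk tendsto_id)
  rw [hasFDerivAt_iff_isLittleO_nhds_zero]
  refine IsBigO.trans_isLittleO (IsBigO.of_bound' (.of_forall fun h => ?_))
    (hlower.norm_left.add hupper.norm_left)
  have hW_lower := hmax (θ₀ + h) (s θ₀)
  have hW_upper := hmax θ₀ (s (θ₀ + h))
  simp only [Function.comp_apply, id, Real.norm_eq_abs]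
  refine (abs_le_max_abs_abs (a := F (s θ₀) (θ₀ + h) - F (s θ₀) θ₀ - D (s θ₀) θ₀ h)
    (c := F (s (θ₀ + h)) (θ₀ + h) - F (s (θ₀ + h)) θ₀ - D (s θ₀) θ₀ h)
    (by linarith) (by linarith)).trans ?_
  exact (max_le_add_of_nonneg (abs_nonneg _) (abs_nonneg _)).trans (le_abs_self _)

end Envelope

section CompactSupport

variable {Z E : Type*} [TopologicalSpace Z] [MeasurableSpace Z] [OpensMeasurableSpace Z]
  [SecondCountableTopology Z] {μ : Measure Z} [IsFiniteMeasure μ] {K : Set Z}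
  [NormedAddCommGroup E]

theorem Continuous.integrable_of_ae_mem_isCompact {f : Z → E} (hf : Continuous f)
    (hK : IsCompact K) (hμ : ∀ᵐ z ∂μ, z ∈ K) : Integrable f μ := by
  obtain ⟨C, hC⟩ := hK.exists_bound_of_continuousOn hf.continuousOn
  exact .mono' (integrable_const C) hf.aestronglyMeasurable (hμ.mono hC)

theorem continuous_integral_of_ae_mem_isCompact [NormedSpace ℝ E] {P : Type*} [TopologicalSpace P]
    [FirstCountableTopology P] [LocallyCompactSpace P] {G : P → Z → E}
    (hG : Continuous (Function.uncurry G)) (hK : IsCompact K) (hμ : ∀ᵐ z ∂μ, z ∈ K) :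
    Continuous fun p => ∫ z, G p z ∂μ := by
  simpa only [Measure.restrict_eq_self_of_ae_mem hμ] using
    continuous_parametric_integral_of_continuous (μ := μ) hG hK

theorem hasFDerivAt_integral_of_continuous_fderiv [NormedSpace ℝ E] {H : Type*}
    [NormedAddCommGroup H] [NormedSpace ℝ H] [LocallyCompactSpace H] {Φ : H → Z → E} {Φ' : H → Z → H →L[ℝ] E}
    (hd : ∀ θ z, HasFDerivAt (Φ · z) (Φ' θ z) θ) (hΦ : ∀ θ, Continuous (Φ θ))
    (hΦ' : Continuous (Function.uncurry Φ')) (hK : IsCompact K) (hμ : ∀ᵐ z ∂μ, z ∈ K)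
    (θ₀ : H) : HasFDerivAt (fun θ => ∫ z, Φ θ z ∂μ) (∫ z, Φ' θ₀ z ∂μ) θ₀ := by
  obtain ⟨U, hUc, hU⟩ := exists_compact_mem_nhds θ₀
  obtain ⟨C, hC⟩ := (hUc.prod hK).exists_bound_of_continuousOn hΦ'.continuousOn
  refine hasFDerivAt_integral_of_dominated_of_fderiv_le (bound := fun _ => C) hU
    (.of_forall fun θ => (hΦ θ).aestronglyMeasurable)
    ((hΦ θ₀).integrable_of_ae_mem_isCompact hK hμ)
    (hΦ'.comp (Continuous.prodMk_right θ₀)).aestronglyMeasurable ?_ (integrable_const C)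
    (.of_forall fun z θ _ => hd θ z)
  filter_upwards [hμ] with z hz θ hθ using hC (θ, z) ⟨hθ, hz⟩

end CompactSupport

section Slice

variable {𝕜 E F G : Type*} [NontriviallyNormedField 𝕜] [NormedAddCommGroup E] [NormedSpace 𝕜 E]
  [NormedAddCommGroup F] [NormedSpace 𝕜 F] [NormedAddCommGroup G] [NormedSpace 𝕜 G]
  {f : E × F → G}

theorem ContDiff.hasFDerivAt_slice_left (hf : ContDiff 𝕜 1 f) (a : E) (b : F) :
    HasFDerivAt (fun a' => f (a', b)) (fderiv 𝕜 (fun a' => f (a', b)) a) a :=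
  ((hf.comp (contDiff_id.prodMk contDiff_const)).differentiable one_ne_zero a).hasFDerivAt

theorem ContDiff.continuous_fderiv_slice_left (hf : ContDiff 𝕜 1 f) :
    Continuous fun p : E × F => fderiv 𝕜 (fun a => f (a, p.2)) p.1 :=
  (ContDiff.fderiv (f := fun p a => f (a, p.2)) (m := 1) (n := 0) (hf.comp (by fun_prop))
    contDiff_fst le_rfl).continuous

end Slice

section CLamTransform

variable {ι X Y : Type*} [Fintype ι]

def softmax (lam : ℝ) (w : ι → ℝ) (i : ι) : ℝ :=
  exp (w i / lam) / ∑ j, exp (w j / lam)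

/-- The `(c, λ)`-transform `ψ^{c,λ}` of the paper is `cLamTransform λ (1 / n) c y ψ`. -/
def cLamTransform (lam a : ℝ) (c : X × Y → ℝ) (y : ι → Y) (ψ : ι → ℝ) (x : X) : ℝ :=
  -lam * log (a * ∑ i, exp ((ψ i - c (x, y i)) / lam))

variable [Nonempty ι] {lam a : ℝ} {c : X × Y → ℝ} {y : ι → Y}

theorem continuous_softmax (lam : ℝ) (i : ι) : Continuous fun w : ι → ℝ => softmax lam w i :=
  .div (by fun_prop) (by fun_prop) fun _ => (sum_pos (fun j _ => exp_pos _) univ_nonempty).ne'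

theorem continuous_cLamTransform [TopologicalSpace X] [TopologicalSpace Y] (ha : a ≠ 0)
    (hc : Continuous c) (ψ : ι → ℝ) : Continuous (cLamTransform lam a c y ψ) :=
  continuous_const.mul <| .log (by fun_prop) fun _ =>
    mul_ne_zero ha (sum_pos (fun i _ => exp_pos _) univ_nonempty).ne'

variable [NormedAddCommGroup X] [NormedSpace ℝ X]

def cLamTransformFDeriv (lam : ℝ) (c : X × Y → ℝ) (y : ι → Y) (ψ : ι → ℝ) (x : X) :
    X →L[ℝ] ℝ :=
  ∑ i, softmax lam (fun j => ψ j - c (x, y j)) i • fderiv ℝ (fun x' => c (x', y i)) x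

theorem hasFDerivAt_cLamTransform (hlam : lam ≠ 0) (ha : a ≠ 0) (ψ : ι → ℝ) {x : X}
    (hc : ∀ i, DifferentiableAt ℝ (fun x' => c (x', y i)) x) :
    HasFDerivAt (cLamTransform lam a c y ψ) (cLamTransformFDeriv lam c y ψ x) x := by
  have hS : 0 < ∑ i, exp ((ψ i - c (x, y i)) / lam) :=
    sum_pos (fun i _ => exp_pos _) univ_nonempty
  have hexp : ∀ i, HasFDerivAt (fun x' => exp ((ψ i - c (x', y i)) / lam))
      (exp ((ψ i - c (x, y i)) / lam) • lam⁻¹ • -fderiv ℝ (fun x' => c (x', y i)) x) x :=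
    fun i => by
      simpa [div_eq_mul_inv] using
        (((hasFDerivAt_const (ψ i) x).sub (hc i).hasFDerivAt).mul_const lam⁻¹).exp
  refine ((((HasFDerivAt.fun_sum fun i _ => hexp i).const_mul a).log
    (mul_ne_zero ha hS.ne')).const_mul (-lam)).congr_fderiv ?_
  simp only [cLamTransformFDeriv, softmax, smul_sum, smul_smul, smul_neg, ← neg_smul]
  refine sum_congr rfl fun i _ => ?_
  congr 1
  field_simp

theorem continuous_cLamTransformFDeriv [NormedAddCommGroup Y] [NormedSpace ℝ Y]
    (lam : ℝ) (hc : ContDiff ℝ 1 c) :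
    Continuous fun p : (ι → ℝ) × X => cLamTransformFDeriv lam c y p.1 p.2 := by
  have hDc := hc.continuous_fderiv_slice_left
  have hc₀ := hc.continuous
  refine continuous_finsetSum _ fun i _ => ?_
  exact ((continuous_softmax lam i).comp (f := fun p : (ι → ℝ) × X => fun j => p.1 j - c (p.2, y j))
    (by fun_prop)).smul (hDc.comp (f := fun p : (ι → ℝ) × X => (p.2, y i)) (by fun_prop))

end CLamTransform

section SemiDual

variable {ι X Y Θ Z : Type*} [Fintype ι] [NormedAddCommGroup X] [NormedSpace ℝ X]
  [NormedAddCommGroup Y] [NormedSpace ℝ Y] [NormedAddCommGroup Θ] [NormedSpace ℝ Θ]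
  [NormedAddCommGroup Z] [NormedSpace ℝ Z]

def cLamTransformCompFDeriv (lam : ℝ) (c : X × Y → ℝ) (y : ι → Y) (g : Θ × Z → X) (ψ : ι → ℝ)
    (θ : Θ) (z : Z) : Θ →L[ℝ] ℝ :=
  (cLamTransformFDeriv lam c y ψ (g (θ, z))).comp (fderiv ℝ (fun θ' => g (θ', z)) θ)

variable [Nonempty ι] {lam a : ℝ} {c : X × Y → ℝ} {y : ι → Y} {g : Θ × Z → X}

theorem hasFDerivAt_cLamTransform_comp (hlam : lam ≠ 0) (ha : a ≠ 0) (ψ : ι → ℝ)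
    (hc : ContDiff ℝ 1 c) (hg : ContDiff ℝ 1 g) (θ : Θ) (z : Z) :
    HasFDerivAt (fun θ => cLamTransform lam a c y ψ (g (θ, z)))
      (cLamTransformCompFDeriv lam c y g ψ θ z) θ :=
  (hasFDerivAt_cLamTransform hlam ha ψ fun _ =>
    (hc.hasFDerivAt_slice_left _ _).differentiableAt).comp θ (hg.hasFDerivAt_slice_left θ z)

theorem continuous_cLamTransformCompFDeriv (lam : ℝ) (hc : ContDiff ℝ 1 c)
    (hg : ContDiff ℝ 1 g) :
    Continuous (Function.uncurry fun (p : (ι → ℝ) × Θ) (z : Z) =>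
      cLamTransformCompFDeriv lam c y g p.1 p.2 z) := by
  have hDc := continuous_cLamTransformFDeriv (y := y) lam hc
  have hDg := hg.continuous_fderiv_slice_left
  have hg₀ := hg.continuous
  unfold cLamTransformCompFDeriv Function.uncurry
  fun_prop

variable [MeasurableSpace Z] [OpensMeasurableSpace Z] [SecondCountableTopology Z]
  {μ : Measure Z} [IsFiniteMeasure μ] {K : Set Z}

theorem integrable_cLamTransformCompFDeriv (lam : ℝ) (hc : ContDiff ℝ 1 c)
    (hg : ContDiff ℝ 1 g) (hK : IsCompact K) (hμ : ∀ᵐ z ∂μ, z ∈ K) (ψ : ι → ℝ) (θ : Θ) :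
    Integrable (cLamTransformCompFDeriv lam c y g ψ θ) μ :=
  ((continuous_cLamTransformCompFDeriv lam hc hg).comp (f := fun z : Z => ((ψ, θ), z))
    (by fun_prop)).integrable_of_ae_mem_isCompact hK hμ

variable [LocallyCompactSpace Θ]

theorem continuous_integral_cLamTransformCompFDeriv (lam : ℝ) (hc : ContDiff ℝ 1 c)
    (hg : ContDiff ℝ 1 g) (hK : IsCompact K) (hμ : ∀ᵐ z ∂μ, z ∈ K) :
    Continuous fun p : (ι → ℝ) × Θ => ∫ z, cLamTransformCompFDeriv lam c y g p.1 p.2 z ∂μ :=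
  continuous_integral_of_ae_mem_isCompact (continuous_cLamTransformCompFDeriv lam hc hg) hK hμ

theorem hasFDerivAt_integral_cLamTransform_comp (hlam : lam ≠ 0) (ha : a ≠ 0)
    (hc : ContDiff ℝ 1 c) (hg : ContDiff ℝ 1 g) (hK : IsCompact K) (hμ : ∀ᵐ z ∂μ, z ∈ K)
    (ψ : ι → ℝ) (θ : Θ) :
    HasFDerivAt (fun θ => ∫ z, cLamTransform lam a c y ψ (g (θ, z)) ∂μ)
      (∫ z, cLamTransformCompFDeriv lam c y g ψ θ z ∂μ) θ :=
  hasFDerivAt_integral_of_continuous_fderiv (hasFDerivAt_cLamTransform_comp hlam ha ψ hc hg)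
    (fun θ => (continuous_cLamTransform ha hc.continuous ψ).comp (by fun_prop))
    ((continuous_cLamTransformCompFDeriv lam hc hg).comp
      (f := fun q : Θ × Z => ((ψ, q.1), q.2)) (by fun_prop)) hK hμ θ

end SemiDual

theorem adjoint_sum_smul_gradient {ι E F : Type*} [Fintype ι] [NormedAddCommGroup E]
    [InnerProductSpace ℝ E] [CompleteSpace E] [NormedAddCommGroup F] [InnerProductSpace ℝ F]
    [CompleteSpace F] (A : E →L[ℝ] F) (w : ι → ℝ) (f : ι → F → ℝ) (x : F) :
    ContinuousLinearMap.adjoint A (∑ i, w i • gradient (f i) x)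
      = (toDual ℝ E).symm ((∑ i, w i • fderiv ℝ (f i) x).comp A) := by
  refine (toDual ℝ E).injective ?_
  ext u
  simp [ContinuousLinearMap.adjoint_inner_left, gradient]

theorem integral_toDual_symm {Z E : Type*} [MeasurableSpace Z] {μ : Measure Z}
    [NormedAddCommGroup E] [InnerProductSpace ℝ E] [CompleteSpace E] {φ : Z → StrongDual ℝ E}
    (hφ : Integrable φ μ) :
    ∫ z, (toDual ℝ E).symm (φ z) ∂μ = (toDual ℝ E).symm (∫ z, φ z ∂μ) :=
  ContinuousLinearMap.integral_comp_commSL (by simp)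
    (toDual ℝ E).symm.toContinuousLinearEquiv.toContinuousLinearMap hφ

end

/-- Main differentiation theorem in the semi-discrete setting: the value
`W(θ) = F(s(θ), θ) = sup_ψ F(ψ, θ)` of the semi-dual functional
`F(ψ, θ) = ∫ ψ^{c,λ}(g(θ, z)) dζ(z) + (1/n) Σᵢ ψᵢ` of entropy-regularized optimal
transport between `g(θ,·)♯ζ` and `(1/n) Σᵢ δ_{yᵢ}` is differentiable everywhere, with
gradient `∇W(θ) = ∫ (∂_θ g(θ, z))ᵀ Σᵢ ηᵢ(g(θ, z)) ∇_x c(g(θ, z), yᵢ) dζ(z)`. -/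
theorem semidiscrete_W_hasGradient {d m q k : ℕ}
    (lam : ℝ) (hlam : 0 < lam) (n : ℕ) (hn : 0 < n)
    (y : Fin n → EuclideanSpace ℝ (Fin m))
    (c : EuclideanSpace ℝ (Fin d) × EuclideanSpace ℝ (Fin m) → ℝ)
    (hc : ContDiff ℝ 1 c)
    (ζ : Measure (EuclideanSpace ℝ (Fin q))) [IsProbabilityMeasure ζ]
    (hζ : ∃ K : Set (EuclideanSpace ℝ (Fin q)), IsCompact K ∧ ζ Kᶜ = 0)
    (g : EuclideanSpace ℝ (Fin k) × EuclideanSpace ℝ (Fin q) → EuclideanSpace ℝ (Fin d))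
    (hg : ContDiff ℝ 1 g)
    (s : EuclideanSpace ℝ (Fin k) → Fin n → ℝ) (hs : Continuous s)
    (F : (Fin n → ℝ) → EuclideanSpace ℝ (Fin k) → ℝ)
    (hF : ∀ ψ θ, F ψ θ =
      (∫ z, (-lam * Real.log
          ((1 / (n : ℝ)) * ∑ i, Real.exp ((ψ i - c (g (θ, z), y i)) / lam))) ∂ζ)
        + (1 / (n : ℝ)) * ∑ i, ψ i)
    (hmax : ∀ (θ : EuclideanSpace ℝ (Fin k)) (ψ : Fin n → ℝ), F ψ θ ≤ F (s θ) θ) :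
    ∀ θ : EuclideanSpace ℝ (Fin k),
      HasGradientAt (fun θ' => F (s θ') θ')
        (∫ z, (ContinuousLinearMap.adjoint
            (fderiv ℝ (fun θ' : EuclideanSpace ℝ (Fin k) => g (θ', z)) θ))
          (∑ i, (Real.exp ((s θ i - c (g (θ, z), y i)) / lam) /
                ∑ j, Real.exp ((s θ j - c (g (θ, z), y j)) / lam)) •
              gradient (fun x : EuclideanSpace ℝ (Fin d) => c (x, y i)) (g (θ, z))) ∂ζ)
        θ := by
  intro θ₀
  obtain ⟨K, hK, hKc⟩ := hζ
  have hζK : ∀ᵐ z ∂ζ, z ∈ K := mem_ae_iff.mpr hKc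
  have : Nonempty (Fin n) := ⟨⟨0, hn⟩⟩
  have ha : 1 / (n : ℝ) ≠ 0 := one_div_ne_zero (Nat.cast_ne_zero.mpr hn.ne')
  have hFd : ∀ ψ θ, HasFDerivAt (F ψ) (∫ z, cLamTransformCompFDeriv lam c y g ψ θ z ∂ζ) θ :=
    fun ψ θ => by
      rw [funext (hF ψ)]
      exact (hasFDerivAt_integral_cLamTransform_comp hlam.ne' ha hc hg hK hζK ψ θ).add_const _
  have hW := (hasFDerivAt_envelope (θ₀ := θ₀) hFd
    (continuous_integral_cLamTransformCompFDeriv lam hc hg hK hζK).continuousAt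
    hs.continuousAt hmax).hasGradientAt
  rw [← integral_toDual_symm (integrable_cLamTransformCompFDeriv lam hc hg hK hζK _ _)] at hW
  simpa only [adjoint_sum_smul_gradient, cLamTransformCompFDeriv, cLamTransformFDeriv, softmax]
    using hW
end
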